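/- arXiv:2103.08402 — 4 statements merged into one kernel-verified Lean document; each statement's English description precedes it below -/
import Mathlib

section
/- Let S be a scoring function of the form S(p,y) = ∫_{(0,1)} S_θ(p,y) dν(θ) for a locally finite Borel measure ν, and let 0 < p < q < 1 with ν([p,q)) > 0 and ∫_{[p,q)} θ dν(θ) < ∞. Then the set H_S = {π ∈ [0,1] : E_π[S(p,Y) − S(q,Y)] ≤ 0} equals the interval [0, κ], where κ = (∫_{[p,q)} θ dν(θ)) / ν([p,q)). -/
/-!
For `p ≤ q` the `1{y > θ}` terms cancel: `S_θ(p,y) − S_θ(q,y) = (y − θ) 1{p ≤ θ < q}`.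
Hence the expected score difference under `Bernoulli(π)` is `π ν([p,q)) − ∫_{[p,q)} θ dν`,
an increasing affine function of `π` vanishing at `κ`; and `κ ≤ 1` because `θ < 1` on `[p,q)`.
-/

open MeasureTheory

/-- The elementary scoring function `S_θ(p,y) = (θ − y)(1{p > θ} − 1{y > θ})`. -/
noncomputable def elemScore (θ p y : ℝ) : ℝ :=
  (θ - y) * ((if θ < p then (1 : ℝ) else 0) - (if θ < y then (1 : ℝ) else 0))

open Set

lemma elemScore_sub_elemScore {p q : ℝ} (hpq : p ≤ q) (θ y : ℝ) :
    elemScore θ p y - elemScore θ q y = (Ico p q).indicator (fun θ => y - θ) θ := by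
  simp only [elemScore, indicator, mem_Ico]
  split_ifs <;> grind

lemma setIntegral_elemScore_sub {ν : Measure ℝ} {s : Set ℝ} {p q y : ℝ} (hpq : p ≤ q)
    (hsub : Ico p q ⊆ s)
    (hp : IntegrableOn (fun θ => elemScore θ p y) s ν)
    (hq : IntegrableOn (fun θ => elemScore θ q y) s ν) :
    (∫ θ in s, elemScore θ p y ∂ν) - ∫ θ in s, elemScore θ q y ∂ν
      = ∫ θ in Ico p q, (y - θ) ∂ν := by
  rw [← integral_sub hp hq]
  simp_rw [elemScore_sub_elemScore hpq]
  rw [setIntegral_indicator measurableSet_Ico, inter_eq_right.2 hsub]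

lemma setIntegral_const_sub_id {ν : Measure ℝ} {s : Set ℝ} (hs : ν s ≠ ⊤)
    (hid : IntegrableOn (fun θ => θ) s ν) (y : ℝ) :
    ∫ θ in s, (y - θ) ∂ν = y * ν.real s - ∫ θ in s, θ ∂ν := by
  rw [integral_sub (integrableOn_const (C := y) hs) hid, setIntegral_const, smul_eq_mul, mul_comm]

lemma sep_Icc_affine_nonpos_eq_Icc {m I : ℝ} (hm : 0 < m) (hIm : I ≤ m) :
    {π ∈ Icc (0 : ℝ) 1 | (1 - π) * -I + π * (m - I) ≤ 0} = Icc 0 (I / m) := by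
  ext π
  simp only [mem_ofPred_eq, mem_Icc, le_div_iff₀ hm]
  constructor
  · rintro ⟨⟨hπ0, -⟩, hle⟩
    exact ⟨hπ0, by linarith⟩
  · rintro ⟨hπ0, hle⟩
    exact ⟨⟨hπ0, by nlinarith⟩, by linarith⟩

/-- For a scoring function `S(p,y) = ∫_{(0,1)} S_θ(p,y) dν(θ)` with locally
finite mixing measure `ν`, forecasts `0 < p < q < 1` with `ν([p,q)) > 0` and
`θ` ν-integrable over `[p,q)`, the null hypothesis
`H_S = {π ∈ [0,1] : E_π[S(p,Y) − S(q,Y)] ≤ 0}` is the interval `[0, κ_ν([p,q))]`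
where `κ_ν([p,q)) = ∫_{[p,q)} θ dν / ν([p,q))`. -/
theorem null_hypothesis_interval (ν : Measure ℝ) [IsLocallyFiniteMeasure ν]
    (p q : ℝ) (hp : 0 < p) (hpq : p < q) (hq : q < 1)
    (hpos : 0 < ν (Set.Ico p q))
    (hIntθ : IntegrableOn (fun θ => θ) (Set.Ico p q) ν)
    (hIntp : ∀ y ∈ ({0, 1} : Set ℝ),
      IntegrableOn (fun θ => elemScore θ p y) (Set.Ioo 0 1) ν)
    (hIntq : ∀ y ∈ ({0, 1} : Set ℝ),
      IntegrableOn (fun θ => elemScore θ q y) (Set.Ioo 0 1) ν) :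
    {π ∈ Set.Icc (0 : ℝ) 1 |
        (1 - π) * ((∫ θ in Set.Ioo (0 : ℝ) 1, elemScore θ p 0 ∂ν)
              - ∫ θ in Set.Ioo (0 : ℝ) 1, elemScore θ q 0 ∂ν)
          + π * ((∫ θ in Set.Ioo (0 : ℝ) 1, elemScore θ p 1 ∂ν)
              - ∫ θ in Set.Ioo (0 : ℝ) 1, elemScore θ q 1 ∂ν) ≤ 0}
      = Set.Icc 0 ((∫ θ in Set.Ico p q, θ ∂ν) / (ν (Set.Ico p q)).toReal) := by
  have hsub : Ico p q ⊆ Ioo 0 1 := fun θ hθ => ⟨hp.trans_le hθ.1, hθ.2.trans hq⟩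
  have hfin : ν (Ico p q) ≠ ⊤ :=
    ((measure_mono Ico_subset_Icc_self).trans_lt isCompact_Icc.measure_lt_top).ne
  have hdiff : ∀ y ∈ ({0, 1} : Set ℝ),
      (∫ θ in Ioo 0 1, elemScore θ p y ∂ν) - ∫ θ in Ioo 0 1, elemScore θ q y ∂ν
        = y * ν.real (Ico p q) - ∫ θ in Ico p q, θ ∂ν := fun y hy => by
    rw [setIntegral_elemScore_sub hpq.le hsub (hIntp y hy) (hIntq y hy),
      setIntegral_const_sub_id hfin hIntθ]
  have hmean_le : ∫ θ in Ico p q, θ ∂ν ≤ ν.real (Ico p q) := by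
    have := setIntegral_nonneg (μ := ν) measurableSet_Ico fun θ (hθ : θ ∈ Ico p q) =>
      sub_nonneg.2 (hθ.2.trans hq).le
    rw [setIntegral_const_sub_id hfin hIntθ, one_mul, sub_nonneg] at this
    exact this
  rw [hdiff 0 (by simp), hdiff 1 (by simp), zero_mul, zero_sub, one_mul,
    ← measureReal_def]
  exact sep_Icc_affine_nonpos_eq_Icc (ENNReal.toReal_pos hpos.ne' hfin) hmean_le
end

section
/- Let d: {0,1} → ℝ satisfy d(0) < 0 < d(1), and let π₀ ∈ (0,1) be the unique root of f(π) = (1−π)d(0) + π d(1). A function E: {0,1} → [0,∞) satisfies [(1−π)E(0) + π E(1) ≤ 1 if and only if f(π) ≤ 0, for all π ∈ [0,1]] if and only if there exists λ ∈ (0,1] such that E(y) = 1 + λ·d(y)/|d(0)|. -/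
/-!
Writing `u = E - 1`, the e-value condition says that the affine maps `π ↦ mean π u` and
`π ↦ mean π d` have the same sublevel set `{· ≤ 0}` on `[0, 1]`. Evaluating at `π = 0, 1` shows
that `u` changes sign like `d`, and evaluating each map at the root of the other gives both
inequalities `u 0 * d 1 ≤ u 1 * d 0` and `u 1 * d 0 ≤ u 0 * d 1`; so `u` is a positive multiple
`c • d` of `d`. Then `λ = c |d 0|`, and `E 0 ≥ 0` is exactly `λ ≤ 1`.
-/

open Set

namespace Bernoulli

def mean (π : ℝ) (v : Fin 2 → ℝ) : ℝ := (1 - π) * v 0 + π * v 1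

noncomputable def meanRoot (v : Fin 2 → ℝ) : ℝ := v 0 / (v 0 - v 1)

@[simp] lemma mean_zero (v : Fin 2 → ℝ) : mean 0 v = v 0 := by simp [mean]

@[simp] lemma mean_one (v : Fin 2 → ℝ) : mean 1 v = v 1 := by simp [mean]

lemma mean_smul (π c : ℝ) (v : Fin 2 → ℝ) : mean π (c • v) = c * mean π v := by
  simp only [mean, Pi.smul_apply, smul_eq_mul]; ring

lemma mean_sub_one (π : ℝ) (v : Fin 2 → ℝ) : mean π (v - 1) = mean π v - 1 := by
  simp only [mean, Pi.sub_apply, Pi.one_apply]; ring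

lemma mean_meanRoot {v : Fin 2 → ℝ} (hv : v 0 ≠ v 1) (w : Fin 2 → ℝ) :
    mean (meanRoot v) w = (v 0 * w 1 - v 1 * w 0) / (v 0 - v 1) := by
  have : v 0 - v 1 ≠ 0 := sub_ne_zero.mpr hv
  simp only [mean, meanRoot]
  field_simp
  ring

lemma mean_meanRoot_self {v : Fin 2 → ℝ} (hv : v 0 ≠ v 1) : mean (meanRoot v) v = 0 := by
  rw [mean_meanRoot hv, mul_comm, sub_self, zero_div]

lemma meanRoot_mem_Icc {v : Fin 2 → ℝ} (hv0 : v 0 ≤ 0) (hv1 : 0 < v 1) :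
    meanRoot v ∈ Icc 0 1 := by
  have hden : v 0 - v 1 < 0 := by linarith
  exact ⟨div_nonneg_of_nonpos hv0 hden.le, (div_le_one_of_neg hden).mpr (by linarith)⟩

lemma cross_nonneg_of_mean_meanRoot_nonpos {u v : Fin 2 → ℝ} (hv0 : v 0 ≤ 0) (hv1 : 0 < v 1)
    (h : mean (meanRoot v) u ≤ 0) : 0 ≤ v 0 * u 1 - v 1 * u 0 := by
  rwa [mean_meanRoot (by linarith), div_le_iff_of_neg (by linarith), zero_mul] at h

theorem mean_nonpos_iff_iff_exists_pos_smul {u d : Fin 2 → ℝ} (hd0 : d 0 < 0) (hd1 : 0 < d 1) :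
    (∀ π ∈ Icc (0 : ℝ) 1, (mean π u ≤ 0 ↔ mean π d ≤ 0)) ↔ ∃ c : ℝ, 0 < c ∧ u = c • d := by
  constructor
  · intro h
    have hu0 : u 0 ≤ 0 := by simpa using (h 0 ⟨le_rfl, zero_le_one⟩).mpr (by simpa using hd0.le)
    have hu1 : 0 < u 1 := by
      by_contra! hu1
      have := (h 1 ⟨zero_le_one, le_rfl⟩).mp (by simpa using hu1)
      simp only [mean_one] at this
      linarith
    have hud : 0 ≤ d 0 * u 1 - d 1 * u 0 := cross_nonneg_of_mean_meanRoot_nonpos hd0.le hd1 <|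
      (h _ (meanRoot_mem_Icc hd0.le hd1)).mpr (mean_meanRoot_self (by linarith)).le
    have hdu : 0 ≤ u 0 * d 1 - u 1 * d 0 := cross_nonneg_of_mean_meanRoot_nonpos hu0 hu1 <|
      (h _ (meanRoot_mem_Icc hu0 hu1)).mp (mean_meanRoot_self (by linarith)).le
    refine ⟨u 1 / d 1, div_pos hu1 hd1, funext <| Fin.forall_fin_two.mpr ⟨?_, ?_⟩⟩
    · simp only [Pi.smul_apply, smul_eq_mul]
      field_simp
      linarith
    · simp only [Pi.smul_apply, smul_eq_mul]
      field_simp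
  · rintro ⟨c, hc, rfl⟩ π _
    rw [mean_smul]
    exact ⟨fun h => nonpos_of_mul_nonpos_right h hc, mul_nonpos_of_nonneg_of_nonpos hc.le⟩

end Bernoulli

open Bernoulli in
/-- Characterization of e-values for score-difference null hypotheses on a
binary outcome: with `d(0) < 0 < d(1)` (the score differences at the two
outcomes), a nonnegative `E : {0,1} → [0,∞)` satisfies
`(1−π)E(0) + πE(1) ≤ 1 ⟺ (1−π)d(0) + πd(1) ≤ 0` for all `π ∈ [0,1]`
if and only if `E(y) = 1 + λ d(y)/|d(0)|` for some `λ ∈ (0,1]`. -/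
theorem evalue_characterization (d E : Fin 2 → ℝ) (hd0 : d 0 < 0)
    (hd1 : 0 < d 1) (hE : ∀ y, 0 ≤ E y) :
    (∀ π ∈ Set.Icc (0 : ℝ) 1,
        ((1 - π) * E 0 + π * E 1 ≤ 1 ↔ (1 - π) * d 0 + π * d 1 ≤ 0))
      ↔ ∃ l ∈ Set.Ioc (0 : ℝ) 1, ∀ y, E y = 1 + l * d y / |d 0| := by
  have hmean (π : ℝ) : (1 - π) * E 0 + π * E 1 ≤ 1 ↔ mean π (E - 1) ≤ 0 := by
    rw [mean_sub_one, sub_nonpos]; rfl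
  simp_rw [hmean]
  refine (mean_nonpos_iff_iff_exists_pos_smul hd0 hd1).trans ?_
  rw [abs_of_neg hd0]
  have hE_eq (l : ℝ) : E - 1 = (l / -d 0) • d ↔ ∀ y, E y = 1 + l * d y / -d 0 := by
    rw [funext_iff]
    simp only [Pi.sub_apply, Pi.one_apply, Pi.smul_apply, smul_eq_mul, div_mul_eq_mul_div,
      sub_eq_iff_eq_add']
  constructor
  · rintro ⟨c, hc, hcd⟩
    rw [← mul_div_cancel_right₀ c (neg_ne_zero.mpr hd0.ne), hE_eq] at hcd
    have hE0 := hcd 0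
    rw [mul_div_assoc, div_neg_self hd0.ne] at hE0
    exact ⟨c * -d 0, ⟨mul_pos hc (neg_pos.mpr hd0), by linarith [hE 0]⟩, hcd⟩
  · rintro ⟨l, ⟨hl0, -⟩, hl⟩
    exact ⟨l / -d 0, div_pos hl0 (neg_pos.mpr hd0), (hE_eq l).mpr hl⟩
end

section
/- Let d(0) < 0 < d(1), h = d(1)/d(0), and π₁ ∈ (0,1) with (1−π₁)d(0) + π₁ d(1) > 0. With λ₀ = π₁ + (1−π₁)/h and κ = d(0)/(d(0) − d(1)) ∈ (0,1), the e-value E(y) = 1 + λ₀ d(y)/|d(0)| satisfies E(0) = (1−π₁)/(1−κ) and E(1) = π₁/κ. -/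
/-!
Since `|d(0)| = -d(0)`, the e-value is `E(y) = 1 - λ₀ d(y)/d(0)`. Substituting
`λ₀ = π₁ + (1 - π₁) d(0)/d(1)` gives `E(0) = (1 - π₁)(d(1) - d(0))/d(1)` and
`E(1) = π₁ (d(0) - d(1))/d(0)`, which are `(1 - π₁)/(1 - κ)` and `π₁/κ` because
`1 - κ = d(1)/(d(1) - d(0))`.
-/

section

variable {d0 d1 π : ℝ}

theorem div_sub_mem_Ioo_of_neg_of_pos (hd0 : d0 < 0) (hd1 : 0 < d1) :
    d0 / (d0 - d1) ∈ Set.Ioo (0 : ℝ) 1 := by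
  have hdiff : d0 - d1 < 0 := by linarith
  exact ⟨div_pos_of_neg_of_neg hd0 hdiff, (div_lt_one_of_neg hdiff).2 (by linarith)⟩

theorem one_sub_add_div_ratio_eq (hd1 : d1 ≠ 0) (hne : d0 - d1 ≠ 0) :
    1 - (π + (1 - π) / (d1 / d0)) = (1 - π) / (1 - d0 / (d0 - d1)) := by
  rw [one_sub_div hne, sub_sub_cancel_left, div_div_eq_mul_div, div_div_eq_mul_div]
  field_simp
  ring

theorem one_sub_add_div_ratio_mul_ratio_eq (hd0 : d0 ≠ 0) (hd1 : d1 ≠ 0) :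
    1 - (π + (1 - π) / (d1 / d0)) * (d1 / d0) = π / (d0 / (d0 - d1)) := by
  rw [div_div_eq_mul_div]
  field_simp
  ring

end

theorem grow_evalue_likelihood_ratio_general (d0 d1 π₁ h lam₀ κ : ℝ)
    (hd0 : d0 < 0) (hd1 : 0 < d1)
    (hh : h = d1 / d0) (hlam₀ : lam₀ = π₁ + (1 - π₁) / h)
    (hκ : κ = d0 / (d0 - d1)) :
    κ ∈ Set.Ioo (0 : ℝ) 1 ∧
      1 + lam₀ * d0 / |d0| = (1 - π₁) / (1 - κ) ∧
      1 + lam₀ * d1 / |d0| = π₁ / κ := by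
  subst hh hlam₀ hκ
  have hdiff : d0 - d1 ≠ 0 := by linarith
  rw [abs_of_neg hd0]
  refine ⟨div_sub_mem_Ioo_of_neg_of_pos hd0 hd1, ?_, ?_⟩
  · rw [← one_sub_add_div_ratio_eq hd1.ne' hdiff, mul_div_assoc, div_neg, div_self hd0.ne]
    ring
  · rw [← one_sub_add_div_ratio_mul_ratio_eq hd0.ne hd1.ne', mul_div_assoc, div_neg]
    ring

/-- The growth-rate optimal e-value is a likelihood ratio: with
`d(0) < 0 < d(1)`, `h = d(1)/d(0)`, `λ₀ = π₁ + (1−π₁)/h` and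
`κ = d(0)/(d(0) − d(1)) ∈ (0,1)`, the e-value `E(y) = 1 + λ₀ d(y)/|d(0)|`
satisfies `E(0) = (1−π₁)/(1−κ)` and `E(1) = π₁/κ`. -/
theorem grow_evalue_likelihood_ratio (d0 d1 π₁ h lam₀ κ : ℝ)
    (hd0 : d0 < 0) (hd1 : 0 < d1) (hπ₁ : π₁ ∈ Set.Ioo (0 : ℝ) 1)
    (halt : 0 < (1 - π₁) * d0 + π₁ * d1)
    (hh : h = d1 / d0) (hlam₀ : lam₀ = π₁ + (1 - π₁) / h)
    (hκ : κ = d0 / (d0 - d1)) :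
    κ ∈ Set.Ioo (0 : ℝ) 1 ∧
      1 + lam₀ * d0 / |d0| = (1 - π₁) / (1 - κ) ∧
      1 + lam₀ * d1 / |d0| = π₁ / κ :=
  grow_evalue_likelihood_ratio_general d0 d1 π₁ h lam₀ κ hd0 hd1 hh hlam₀ hκ
end

section
/- For the spherical score S(p,y) = 1 − |1−y−p|/‖p‖ with ‖p‖ = (2p² − 2p + 1)^{1/2}, and 0 < p < q < 1, the expected score difference E_π[S(p,Y) − S(q,Y)] under Y ~ Bernoulli(π) is nonpositive if and only if π ≤ ((q−1)‖p‖ − (p−1)‖q‖) / ((2q−1)‖p‖ − (2p−1)‖q‖). -/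
/-- The Euclidean norm `‖p‖ = √(2p² − 2p + 1)` of the vector `(p, 1−p)`. -/
noncomputable def probNorm (p : ℝ) : ℝ := Real.sqrt (2 * p ^ 2 - 2 * p + 1)

/-- The spherical score `S(p,y) = 1 − |1 − y − p| / ‖p‖`. -/
noncomputable def sphericalScore (p y : ℝ) : ℝ := 1 - |1 - y - p| / probNorm p

/-!
Multiplying the expected score difference by `‖p‖‖q‖ > 0` turns it into the affine function
`((1−q)‖p‖ − (1−p)‖q‖) + π ((2q−1)‖p‖ − (2p−1)‖q‖)` of `π`, so the claim amounts to the slope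
being positive. That is the strict monotonicity of `x ↦ (2x−1)/‖x‖ = √2 u/√(u²+1)`, `u = 2x−1`.
-/

lemma probNorm_radicand_pos (p : ℝ) : 0 < 2 * p ^ 2 - 2 * p + 1 := by
  nlinarith [sq_nonneg (2 * p - 1)]

lemma probNorm_sq (p : ℝ) : probNorm p ^ 2 = 2 * p ^ 2 - 2 * p + 1 :=
  Real.sq_sqrt (probNorm_radicand_pos p).le

lemma probNorm_pos (p : ℝ) : 0 < probNorm p :=
  Real.sqrt_pos.mpr (probNorm_radicand_pos p)

lemma sphericalScore_zero {p : ℝ} (hp : p ≤ 1) :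
    sphericalScore p 0 = 1 - (1 - p) / probNorm p := by
  rw [sphericalScore, sub_zero, abs_of_nonneg (sub_nonneg.mpr hp)]

lemma sphericalScore_one {p : ℝ} (hp : 0 ≤ p) :
    sphericalScore p 1 = 1 - p / probNorm p := by
  rw [sphericalScore, sub_self, zero_sub, abs_neg, abs_of_nonneg hp]

lemma two_mul_sub_one_mul_probNorm_lt {p q : ℝ} (hpq : p < q) :
    (2 * p - 1) * probNorm q < (2 * q - 1) * probNorm p := by
  have hNp := probNorm_pos p
  have hNq := probNorm_pos q
  -- the sign of the difference is read off from the sign of the sum, case by case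
  have hsq : ((2 * q - 1) * probNorm p - (2 * p - 1) * probNorm q)
      * ((2 * q - 1) * probNorm p + (2 * p - 1) * probNorm q)
      = ((2 * q - 1) ^ 2 - (2 * p - 1) ^ 2) / 2 := by
    linear_combination (2 * q - 1) ^ 2 * probNorm_sq p - (2 * p - 1) ^ 2 * probNorm_sq q
  rcases lt_or_ge (2 * q - 1) 0 with hq | hq
  · have hsum : (2 * q - 1) * probNorm p + (2 * p - 1) * probNorm q < 0 := by nlinarith
    nlinarith
  rcases lt_or_ge (2 * p - 1) 0 with hp | hp
  · nlinarith [mul_nonneg hq hNp.le]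
  · have hsum : 0 < (2 * q - 1) * probNorm p + (2 * p - 1) * probNorm q := by nlinarith
    nlinarith

lemma expected_sphericalScore_sub_mul {p q : ℝ} (hp : 0 ≤ p) (hp1 : p ≤ 1) (hq : 0 ≤ q)
    (hq1 : q ≤ 1) (π : ℝ) :
    ((1 - π) * (sphericalScore p 0 - sphericalScore q 0)
        + π * (sphericalScore p 1 - sphericalScore q 1)) * (probNorm p * probNorm q)
      = ((1 - q) * probNorm p - (1 - p) * probNorm q)
        + π * ((2 * q - 1) * probNorm p - (2 * p - 1) * probNorm q) := by
  rw [sphericalScore_zero hp1, sphericalScore_zero hq1, sphericalScore_one hp,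
    sphericalScore_one hq]
  field_simp [(probNorm_pos p).ne', (probNorm_pos q).ne']
  ring

theorem spherical_dominance_iff_general (p q π : ℝ) (hp : 0 < p) (hpq : p < q)
    (hq : q < 1) :
    (1 - π) * (sphericalScore p 0 - sphericalScore q 0)
        + π * (sphericalScore p 1 - sphericalScore q 1) ≤ 0
      ↔ π ≤ ((q - 1) * probNorm p - (p - 1) * probNorm q)
          / ((2 * q - 1) * probNorm p - (2 * p - 1) * probNorm q) := by
  have hslope := sub_pos.mpr (two_mul_sub_one_mul_probNorm_lt hpq)
  rw [← mul_le_mul_iff_of_pos_right (mul_pos (probNorm_pos p) (probNorm_pos q)), zero_mul,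
    expected_sphericalScore_sub_mul hp.le (hpq.trans hq).le (hp.trans hpq).le hq.le,
    le_div_iff₀ hslope]
  constructor <;> intro h <;> linarith

/-- For the spherical score and `0 < p < q < 1`, the expected score difference
under `Y ~ Bernoulli(π)` is nonpositive iff
`π ≤ ((q−1)‖p‖ − (p−1)‖q‖) / ((2q−1)‖p‖ − (2p−1)‖q‖)`. -/
theorem spherical_dominance_iff (p q π : ℝ) (hp : 0 < p) (hpq : p < q)
    (hq : q < 1) (hπ : π ∈ Set.Icc (0 : ℝ) 1) :
    (1 - π) * (sphericalScore p 0 - sphericalScore q 0)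
        + π * (sphericalScore p 1 - sphericalScore q 1) ≤ 0
      ↔ π ≤ ((q - 1) * probNorm p - (p - 1) * probNorm q)
          / ((2 * q - 1) * probNorm p - (2 * p - 1) * probNorm q) :=
  spherical_dominance_iff_general p q π hp hpq hq
end
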